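/- arXiv:0811.4626 — 3 statements merged into one kernel-verified Lean document; each statement's English description precedes it below -/
import Mathlib

section
/- Let n be a positive integer and let φ be a kV₄-module endomorphism of M_n. If φ factors through a projective kV₄-module, then the range of φ is contained in the k-linear span of {b_1, …, b_n} (the socle of M_n). -/
universe u v w

/-- A homomorphism of `A`-modules factors through a projective `A`-module. -/
def FactorsThroughProjective {A : Type u} [Ring A] {M : Type v} {N : Type w}
    [AddCommGroup M] [Module A M] [AddCommGroup N] [Module A N]
    (φ : M →ₗ[A] N) : Prop :=
  ∃ (Q : ModuleCat.{max u v w} A) (f : M →ₗ[A] Q) (g : Q →ₗ[A] N),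
    Module.Projective A Q ∧ g ∘ₗ f = φ

/-- The Klein four group. -/
abbrev V4 : Type := Multiplicative (ZMod 2 × ZMod 2)

/-- The first generator `s` of the Klein four group. -/
def sV4 : V4 := Multiplicative.ofAdd (1, 0)

/-- The second generator `t` of the Klein four group. -/
def tV4 : V4 := Multiplicative.ofAdd (0, 1)

/-- `B` is a `k`-basis `a_1,…,a_n,b_1,…,b_n` of the `kV₄`-module `M` on which
`x = s - 1` and `y = t - 1` act by `x·a_i = b_i`, `y·a_i = b_{i+1}` (`i < n`),
`y·a_n = 0`, `x·b_i = y·b_i = 0`; i.e. `M` is the module `M_n`. -/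
def IsKleinModuleBasis (k : Type) [Field k] (n : ℕ) (M : Type) [AddCommGroup M]
    [Module k M] [Module (MonoidAlgebra k V4) M]
    [IsScalarTower k (MonoidAlgebra k V4) M]
    (B : Module.Basis (Fin n ⊕ Fin n) k M) : Prop :=
  (∀ i : Fin n, (MonoidAlgebra.of k V4 sV4 - 1) • B (Sum.inl i) = B (Sum.inr i)) ∧
  (∀ (i : Fin n) (h : (i : ℕ) + 1 < n),
      (MonoidAlgebra.of k V4 tV4 - 1) • B (Sum.inl i) = B (Sum.inr ⟨(i : ℕ) + 1, h⟩)) ∧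
  (∀ i : Fin n, (i : ℕ) + 1 = n → (MonoidAlgebra.of k V4 tV4 - 1) • B (Sum.inl i) = 0) ∧
  (∀ i : Fin n, (MonoidAlgebra.of k V4 sV4 - 1) • B (Sum.inr i) = 0) ∧
  (∀ i : Fin n, (MonoidAlgebra.of k V4 tV4 - 1) • B (Sum.inr i) = 0)

/-!
In characteristic 2 the norm element `N = 1 + s + t + st` of `kV₄` equals `xy`. It kills `M_n`,
since `y·M_n` lies in the socle `S = span {b_i}`, which `x` kills. For every `a ∈ kV₄` we have
`N·a = ε(a)·N` with `ε` the augmentation, and `N` has coefficient `1` at the identity; so in a free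
module the elements killed by `N` are those with all coordinates in `J = ker ε`, and passing to a
direct summand, every element of a projective module killed by `N` lies in `J·Q`. Hence if
`φ = g ∘ f` through a projective `Q`, then `φ m = g (f m) ∈ J·M_n ⊆ S`.
-/

namespace MonoidAlgebra

section Augmentation

variable (k G : Type*) [CommRing k] [Monoid G]

noncomputable def augmentation : MonoidAlgebra k G →ₐ[k] k := lift k k G 1

variable {k G}

@[simp]
lemma augmentation_of (g : G) : augmentation k G (of k G g) = 1 := by
  simp [augmentation]

variable {M : Type*} [AddCommGroup M] [Module k M] [Module (MonoidAlgebra k G) M]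
  [IsScalarTower k (MonoidAlgebra k G) M] {S : Submodule k M}

lemma smul_sub_augmentation_smul_mem {m : M} (h : ∀ g : G, of k G g • m - m ∈ S)
    (a : MonoidAlgebra k G) : a • m - augmentation k G a • m ∈ S := by
  induction a using MonoidAlgebra.induction_on with
  | of g => rw [augmentation_of, one_smul]; exact h g
  | add a b ha hb => simpa [add_smul, add_sub_add_comm] using S.add_mem ha hb
  | smul r a ha => simpa [smul_assoc, smul_sub, mul_smul] using S.smul_mem r ha

lemma mem_of_mem_augmentation_smul_top (h : ∀ (g : G) (m : M), of k G g • m - m ∈ S) {v : M}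
    (hv : v ∈ RingHom.ker (augmentation k G) • (⊤ : Submodule (MonoidAlgebra k G) M)) :
    v ∈ S := by
  refine Submodule.smul_induction_on (p := (· ∈ S)) hv (fun a ha m _ ↦ ?_) fun _ _ ↦ S.add_mem
  have := smul_sub_augmentation_smul_mem (h · m) a
  rwa [RingHom.mem_ker.mp ha, zero_smul, sub_zero] at this

end Augmentation

section NormElement

variable (k G : Type*) [CommRing k] [Group G] [Fintype G]

noncomputable def normElement : MonoidAlgebra k G := ∑ g, of k G g

variable {k G}

lemma normElement_mul_of (g : G) : normElement k G * of k G g = normElement k G := by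
  simp only [normElement, Finset.sum_mul, ← map_mul]
  exact Fintype.sum_equiv (Equiv.mulRight g) _ _ fun _ ↦ rfl

lemma normElement_mul (a : MonoidAlgebra k G) :
    normElement k G * a = augmentation k G a • normElement k G := by
  induction a using MonoidAlgebra.induction_on with
  | of g => rw [normElement_mul_of, augmentation_of, one_smul]
  | add a b ha hb => rw [mul_add, ha, hb, map_add, add_smul]
  | smul r a ha => rw [mul_smul_comm, ha, map_smul, smul_smul, smul_eq_mul]

lemma coeff_normElement_one : (normElement k G).coeff 1 = 1 := by
  classical
  simp [normElement, coeff_sum, of_apply]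

lemma normElement_mul_eq_zero_iff {a : MonoidAlgebra k G} :
    normElement k G * a = 0 ↔ augmentation k G a = 0 := by
  refine ⟨fun h ↦ ?_, fun h ↦ by rw [normElement_mul, h, zero_smul]⟩
  simpa [coeff_normElement_one] using
    congr_arg (fun b : MonoidAlgebra k G ↦ b.coeff 1) ((normElement_mul a).symm.trans h)

lemma mem_augmentation_smul_top_of_normElement_smul_eq_zero {Q : Type*} [AddCommGroup Q]
    [Module (MonoidAlgebra k G) Q] [hQ : Module.Projective (MonoidAlgebra k G) Q] {q : Q}
    (hq : normElement k G • q = 0) :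
    q ∈ RingHom.ker (augmentation k G) • (⊤ : Submodule (MonoidAlgebra k G) Q) := by
  obtain ⟨σ, hσ⟩ := Module.projective_def.mp hQ
  rw [← hσ q, Finsupp.linearCombination_apply]
  refine Submodule.sum_mem _ fun p _ ↦ Submodule.smul_mem_smul ?_ Submodule.mem_top
  rw [RingHom.mem_ker, ← normElement_mul_eq_zero_iff, ← smul_eq_mul, ← Finsupp.smul_apply,
    ← map_smul, hq, map_zero, Finsupp.zero_apply]

end NormElement

end MonoidAlgebra

open MonoidAlgebra

lemma FactorsThroughProjective.apply_mem_augmentation_smul_top {k G : Type*} [CommRing k]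
    [Group G] [Fintype G] {M N : Type*} [AddCommGroup M] [Module (MonoidAlgebra k G) M]
    [AddCommGroup N] [Module (MonoidAlgebra k G) N] {φ : M →ₗ[MonoidAlgebra k G] N}
    (hφ : FactorsThroughProjective φ) {m : M} (hm : normElement k G • m = 0) :
    φ m ∈ RingHom.ker (augmentation k G) • (⊤ : Submodule (MonoidAlgebra k G) N) := by
  obtain ⟨Q, f, g, hQ, rfl⟩ := hφ
  have hfm : f m ∈ RingHom.ker (augmentation k G) • ⊤ :=
    mem_augmentation_smul_top_of_normElement_smul_eq_zero (by rw [← map_smul, hm, map_zero])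
  exact Submodule.smul_top_le_comap_smul_top _ g hfm

lemma Submodule.smul_mem_of_mem_span {k A M : Type*} [CommRing k] [Ring A] [Algebra k A]
    [AddCommGroup M] [Module k M] [Module A M] [IsScalarTower k A M] {s : Set M}
    {S : Submodule k M} {a : A} (h : ∀ v ∈ s, a • v ∈ S) {v : M} (hv : v ∈ span k s) :
    a • v ∈ S :=
  (span_le (s := s) (p := S.comap (DistribSMul.toLinearMap k M a))).mpr h hv

lemma V4.eq_one_or_eq_s_or_eq_t_or_eq_st (g : V4) :
    g = 1 ∨ g = sV4 ∨ g = tV4 ∨ g = sV4 * tV4 := by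
  revert g; decide

lemma normElement_V4 (k : Type*) [CommRing k] [CharP k 2] :
    normElement k V4 = (of k V4 sV4 - 1) * (of k V4 tV4 - 1) := by
  have huniv : (Finset.univ : Finset V4) = {1, sV4, tV4, sV4 * tV4} := by decide
  have h2 := congr_arg (algebraMap k (MonoidAlgebra k V4)) (CharTwo.two_eq_zero (R := k))
  rw [map_ofNat, map_zero] at h2
  rw [normElement, huniv, Finset.sum_insert (by decide), Finset.sum_insert (by decide),
    Finset.sum_pair (by decide), map_one, map_mul]
  linear_combination (of k V4 sV4 + of k V4 tV4) * h2

abbrev kleinSocle {k : Type} [Field k] {n : ℕ} {M : Type} [AddCommGroup M] [Module k M]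
    (B : Module.Basis (Fin n ⊕ Fin n) k M) : Submodule k M :=
  Submodule.span k (Set.range fun i : Fin n => B (Sum.inr i))

namespace IsKleinModuleBasis

variable {k : Type} [Field k] {n : ℕ} {M : Type} [AddCommGroup M] [Module k M]
  [Module (MonoidAlgebra k V4) M] [IsScalarTower k (MonoidAlgebra k V4) M]
  {B : Module.Basis (Fin n ⊕ Fin n) k M}

lemma s_sub_one_smul_mem (hB : IsKleinModuleBasis k n M B) (m : M) :
    (of k V4 sV4 - 1) • m ∈ kleinSocle B := by
  refine Submodule.smul_mem_of_mem_span ?_ (B.span_eq ▸ Submodule.mem_top (x := m))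
  rintro _ ⟨i | i, rfl⟩
  · rw [hB.1 i]; exact Submodule.subset_span ⟨i, rfl⟩
  · rw [hB.2.2.2.1 i]; exact zero_mem _

lemma t_sub_one_smul_mem (hB : IsKleinModuleBasis k n M B) (m : M) :
    (of k V4 tV4 - 1) • m ∈ kleinSocle B := by
  refine Submodule.smul_mem_of_mem_span ?_ (B.span_eq ▸ Submodule.mem_top (x := m))
  rintro _ ⟨i | i, rfl⟩
  · rcases lt_or_eq_of_le (Nat.succ_le_of_lt i.isLt) with h | h
    · rw [hB.2.1 i h]; exact Submodule.subset_span ⟨_, rfl⟩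
    · rw [hB.2.2.1 i h]; exact zero_mem _
  · rw [hB.2.2.2.2 i]; exact zero_mem _

lemma s_sub_one_smul_eq_zero_of_mem (hB : IsKleinModuleBasis k n M B) {v : M}
    (hv : v ∈ kleinSocle B) : (of k V4 sV4 - 1) • v = 0 := by
  refine (Submodule.mem_bot k).mp (Submodule.smul_mem_of_mem_span ?_ hv)
  rintro _ ⟨i, rfl⟩
  rw [hB.2.2.2.1 i]; exact zero_mem _

lemma normElement_smul_eq_zero [CharP k 2] (hB : IsKleinModuleBasis k n M B) (m : M) :
    normElement k V4 • m = 0 := by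
  rw [normElement_V4, mul_smul]
  exact hB.s_sub_one_smul_eq_zero_of_mem (hB.t_sub_one_smul_mem m)

lemma of_smul_sub_mem (hB : IsKleinModuleBasis k n M B) (g : V4) (m : M) :
    of k V4 g • m - m ∈ kleinSocle B := by
  rw [show of k V4 g • m - m = (of k V4 g - 1) • m by rw [sub_smul, one_smul]]
  rcases V4.eq_one_or_eq_s_or_eq_t_or_eq_st g with rfl | rfl | rfl | rfl
  · rw [map_one, sub_self, zero_smul]; exact zero_mem _
  · exact hB.s_sub_one_smul_mem m
  · exact hB.t_sub_one_smul_mem m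
  · have hst : of k V4 (sV4 * tV4) - 1
        = (of k V4 sV4 - 1) * (of k V4 tV4 - 1) + (of k V4 sV4 - 1) + (of k V4 tV4 - 1) := by
      rw [map_mul]; ring
    rw [hst, add_smul, add_smul, mul_smul]
    exact add_mem (add_mem (hB.s_sub_one_smul_mem _) (hB.s_sub_one_smul_mem m))
      (hB.t_sub_one_smul_mem m)

end IsKleinModuleBasis

theorem stmt8_general (k : Type) [Field k] [CharP k 2]
    (n : ℕ)
    (M : Type) [AddCommGroup M] [Module k M] [Module (MonoidAlgebra k V4) M]
    [IsScalarTower k (MonoidAlgebra k V4) M]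
    (B : Module.Basis (Fin n ⊕ Fin n) k M) (hB : IsKleinModuleBasis k n M B)
    (φ : M →ₗ[MonoidAlgebra k V4] M) (hφ : FactorsThroughProjective φ) :
    ∀ m : M, φ m ∈ Submodule.span k (Set.range fun i : Fin n => B (Sum.inr i)) := by
  intro m
  have hφm := hφ.apply_mem_augmentation_smul_top (hB.normElement_smul_eq_zero m)
  exact mem_of_mem_augmentation_smul_top hB.of_smul_sub_mem hφm

/-- If an endomorphism of `M_n` factors through a projective `kV₄`-module then
its range is contained in the span of `b_1,…,b_n` (the socle of `M_n`). -/
theorem stmt8 (k : Type) [Field k] [IsAlgClosed k] [CharP k 2]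
    (n : ℕ) (hn : 0 < n)
    (M : Type) [AddCommGroup M] [Module k M] [Module (MonoidAlgebra k V4) M]
    [IsScalarTower k (MonoidAlgebra k V4) M]
    (B : Module.Basis (Fin n ⊕ Fin n) k M) (hB : IsKleinModuleBasis k n M B)
    (φ : M →ₗ[MonoidAlgebra k V4] M) (hφ : FactorsThroughProjective φ) :
    ∀ m : M, φ m ∈ Submodule.span k (Set.range fun i : Fin n => B (Sum.inr i)) :=
  stmt8_general k n M B hB φ hφ
end

section
/- Let n be a positive integer and let φ be a kV₄-module endomorphism of M_n whose range equals the one-dimensional subspace k·b_1. Then φ does not factor through a projective kV₄-module. -/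
universe u v w

/-!
Suppose `φ = g ∘ f` with `f : M_n → P`, `P` projective, hence flat. Since `xy` kills `M_n`,
each `f(a_i)` lies in the kernel of `xy` on `P`; in `kV₄` that kernel is the ideal `(x, y)`, and
by flatness the kernel on `P` is `(x, y)P`, so `f(a_i) = x e_i + y e'_i`. Comparing the relations of
`M_n` on both sides, the `a`-coordinates of `g(e_i)` and `g(e'_i)` obey a recursion along
diagonals which starts from zero at `i = n`; it forces the `b_1`-coordinate of `φ(a_i)`, i.e. the
`a_1`-coordinate of `g(e_i)`, to vanish. So `φ` kills every `a_i`, hence `φ = 0`, which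
contradicts `range φ = k·b_1`.
-/

theorem Fin.eq_zero_of_le_of_diagonal_recursion {R : Type*} [AddGroup R] {n : ℕ}
    {c d : Fin n → Fin n → R} (hlast : ∀ i j : Fin n, (i : ℕ) + 1 = n → c i j = 0)
    (hshift : ∀ (i : Fin n) (hi : (i : ℕ) + 1 < n) (j : Fin n), d ⟨i + 1, hi⟩ j = c i j)
    (hdiag : ∀ (i j : Fin n) (hj : (j : ℕ) + 1 < n), c i ⟨j + 1, hj⟩ + d i j = 0) :
    ∀ i j : Fin n, j ≤ i → c i j = 0 := by
  intro i
  induction hr : n - (i + 1 : ℕ) generalizing i with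
  | zero => exact fun j _ => hlast i j (by omega)
  | succ r ih =>
    intro j hji
    rw [Fin.le_def] at hji
    have hi : (i : ℕ) + 1 < n := by omega
    have hj : (j : ℕ) + 1 < n := by omega
    rw [← hshift i hi j, eq_neg_of_add_eq_zero_right (hdiag _ j hj),
      ih ⟨i + 1, hi⟩ (by simp only; omega) ⟨j + 1, hj⟩
        (by rw [Fin.le_def]; simp only; omega), neg_zero]

theorem Module.Flat.mem_smul_top_of_smul_eq_zero {R M : Type*} [CommRing R] [AddCommGroup M]
    [Module R M] [Module.Flat R M] {r : R} {I : Ideal R} (hI : ∀ c, r * c = 0 → c ∈ I)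
    {m : M} (hm : r • m = 0) : m ∈ I • (⊤ : Submodule R M) := by
  obtain ⟨l, a, y, hmy, hay⟩ := Module.Flat.isTrivialRelation_of_sum_smul_eq_zero
    (f := fun _ : Unit => r) (x := fun _ => m) (by simpa using hm)
  rw [show m = _ from hmy ()]
  exact Submodule.sum_mem _ fun j _ =>
    Submodule.smul_mem_smul (hI _ (by simpa using hay j)) Submodule.mem_top

theorem Submodule.exists_smul_add_smul_of_mem_span_pair_smul_top {R M : Type*} [CommRing R]
    [AddCommGroup M] [Module R M] {x y : R} {m : M}
    (hm : m ∈ Ideal.span {x, y} • (⊤ : Submodule R M)) :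
    ∃ e e' : M, m = x • e + y • e' := by
  rw [Ideal.span_insert, Submodule.sup_smul, Submodule.ideal_span_singleton_smul,
    Submodule.ideal_span_singleton_smul, Submodule.mem_sup] at hm
  obtain ⟨_, ⟨e, -, rfl⟩, _, ⟨e', -, rfl⟩, rfl⟩ := hm
  exact ⟨e, e', rfl⟩

theorem Module.Basis.apply_smul_eq_of_forall {R A M N ι : Type*} [CommSemiring R]
    [CommSemiring A] [Algebra R A] [AddCommMonoid M] [Module R M] [Module A M] [IsScalarTower R A M]
    [AddCommMonoid N] [Module R N] (B : Module.Basis ι R M) (a : A) {f g : M →ₗ[R] N}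
    (h : ∀ i, f (a • B i) = g (B i)) (m : M) : f (a • m) = g m :=
  LinearMap.congr_fun (B.ext (f₁ := f ∘ₗ DistribSMul.toLinearMap R M a) h) m

theorem sub_one_mul_self_eq_zero_of_mul_self_eq_one {R : Type*} [CommRing R] [CharP R 2] {u : R}
    (hu : u * u = 1) : (u - 1) * (u - 1) = 0 := by
  linear_combination hu + (1 - u) * CharTwo.two_eq_zero (R := R)

section

variable {k : Type} [Field k]

local notation "X" => (MonoidAlgebra.of k V4 sV4 - 1 : MonoidAlgebra k V4)
local notation "Y" => (MonoidAlgebra.of k V4 tV4 - 1 : MonoidAlgebra k V4)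

namespace KleinFour

theorem x_mul_x [CharP k 2] : X * X = 0 :=
  haveI := charP_of_injective_algebraMap (algebraMap k (MonoidAlgebra k V4)).injective 2
  sub_one_mul_self_eq_zero_of_mul_self_eq_one (by rw [← map_mul]; exact congrArg _ (by decide))

theorem y_mul_y [CharP k 2] : Y * Y = 0 :=
  haveI := charP_of_injective_algebraMap (algebraMap k (MonoidAlgebra k V4)).injective 2
  sub_one_mul_self_eq_zero_of_mul_self_eq_one (by rw [← map_mul]; exact congrArg _ (by decide))

theorem x_mul_y_ne_zero : X * Y ≠ 0 := by
  intro h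
  have h1 : (MonoidAlgebra.of k V4 (sV4 * tV4) - MonoidAlgebra.of k V4 sV4
      - MonoidAlgebra.of k V4 tV4 + 1 : MonoidAlgebra k V4) = 0 := by
    rw [map_mul]; linear_combination h
  have := congrArg (fun f : MonoidAlgebra k V4 => f.coeff (sV4 * tV4)) h1
  have e1 : sV4 ≠ sV4 * tV4 := by decide
  have e2 : tV4 ≠ sV4 * tV4 := by decide
  have e3 : (1 : V4) ≠ sV4 * tV4 := by decide
  simp [MonoidAlgebra.one_def, e1, e2, e3] at this

theorem exists_sub_algebraMap_mem_span (c : MonoidAlgebra k V4) :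
    ∃ e : k, c - algebraMap k _ e ∈ Ideal.span {X, Y} := by
  induction c using MonoidAlgebra.induction_on with
  | of g =>
    refine ⟨1, ?_⟩
    rw [map_one]
    obtain rfl | rfl | rfl | rfl : g = 1 ∨ g = sV4 ∨ g = tV4 ∨ g = sV4 * tV4 := by
      revert g; decide
    · rw [map_one, sub_self]; exact zero_mem _
    · exact Ideal.subset_span (by simp)
    · exact Ideal.subset_span (by simp)
    · rw [map_mul, show ∀ a b : MonoidAlgebra k V4, a * b - 1 = (a - 1) * b + (b - 1) by
        intros; ring]
      exact Ideal.add_mem _ (Ideal.mul_mem_right _ _ (Ideal.subset_span (by simp)))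
        (Ideal.subset_span (by simp))
  | add f g hf hg =>
    obtain ⟨e, he⟩ := hf
    obtain ⟨e', he'⟩ := hg
    exact ⟨e + e', by simpa [map_add, add_sub_add_comm] using Ideal.add_mem _ he he'⟩
  | smul r f hf =>
    obtain ⟨e, he⟩ := hf
    exact ⟨r * e, by
      simpa [map_mul, Algebra.smul_def, mul_sub] using Ideal.mul_mem_left _ (algebraMap k _ r) he⟩

theorem x_mul_y_mul_eq_zero_of_mem_span [CharP k 2] {z : MonoidAlgebra k V4}
    (hz : z ∈ Ideal.span {X, Y}) : X * Y * z = 0 := by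
  obtain ⟨a, b, rfl⟩ := Ideal.mem_span_pair.mp hz
  linear_combination (Y * a) * x_mul_x (k := k) + (X * b) * y_mul_y (k := k)

theorem mem_span_of_x_mul_y_mul_eq_zero [CharP k 2] {c : MonoidAlgebra k V4}
    (hc : X * Y * c = 0) : c ∈ Ideal.span {X, Y} := by
  obtain ⟨e, he⟩ := exists_sub_algebraMap_mem_span c
  have h := x_mul_y_mul_eq_zero_of_mem_span he
  rw [mul_sub, hc, zero_sub, neg_eq_zero, mul_comm, ← Algebra.smul_def] at h
  obtain rfl : e = 0 := (smul_eq_zero.mp h).resolve_right x_mul_y_ne_zero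
  simpa using he

variable {Q : Type*} [AddCommGroup Q] [Module (MonoidAlgebra k V4) Q]

theorem exists_eq_x_smul_add_y_smul [CharP k 2] [Module.Flat (MonoidAlgebra k V4) Q] {q : Q}
    (hq : (X * Y) • q = 0) : ∃ e e' : Q, q = X • e + Y • e' :=
  Submodule.exists_smul_add_smul_of_mem_span_pair_smul_top <|
    Module.Flat.mem_smul_top_of_smul_eq_zero (fun _ => mem_span_of_x_mul_y_mul_eq_zero) hq

theorem x_smul_x_smul_add_y_smul [CharP k 2] (e e' : Q) :
    X • (X • e + Y • e') = (X * Y) • e' := by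
  rw [smul_add, smul_smul, smul_smul, x_mul_x, zero_smul, zero_add]

theorem y_smul_x_smul_add_y_smul [CharP k 2] (e e' : Q) :
    Y • (X • e + Y • e') = (X * Y) • e := by
  rw [smul_add, smul_smul, smul_smul, y_mul_y, zero_smul, add_zero, mul_comm]

end KleinFour

namespace IsKleinModuleBasis

variable {n : ℕ} {M : Type} [AddCommGroup M] [Module k M] [Module (MonoidAlgebra k V4) M]
  [IsScalarTower k (MonoidAlgebra k V4) M] {B : Module.Basis (Fin n ⊕ Fin n) k M}

theorem x_mul_y_smul (hB : IsKleinModuleBasis k n M B) (m : M) : (X * Y) • m = 0 := by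
  refine B.apply_smul_eq_of_forall (f := LinearMap.id) (g := 0) _ (fun i => ?_) m
  obtain ⟨-, hYa, hYan, hXb, hYb⟩ := hB
  rcases i with i | i
  · rw [LinearMap.id_apply, mul_smul]
    by_cases hi : (i : ℕ) + 1 < n
    · rw [hYa i hi, hXb, LinearMap.zero_apply]
    · rw [hYan i (by omega), smul_zero, LinearMap.zero_apply]
  · rw [LinearMap.id_apply, mul_smul, hYb, smul_zero, LinearMap.zero_apply]
theorem coord_inl_x_smul (hB : IsKleinModuleBasis k n M B) (j : Fin n) (m : M) :
    B.coord (Sum.inl j) (X • m) = 0 := by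
  refine B.apply_smul_eq_of_forall (g := 0) _ (fun i => ?_) m
  rcases i with i | i
  · rw [hB.1 i]
    simp
  · rw [hB.2.2.2.1 i]
    simp

theorem coord_inl_y_smul (hB : IsKleinModuleBasis k n M B) (j : Fin n) (m : M) :
    B.coord (Sum.inl j) (Y • m) = 0 := by
  refine B.apply_smul_eq_of_forall (g := 0) _ (fun i => ?_) m
  rcases i with i | i
  · by_cases hi : (i : ℕ) + 1 < n
    · rw [hB.2.1 i hi]
      simp
    · rw [hB.2.2.1 i (by omega)]
      simp
  · rw [hB.2.2.2.2 i]
    simp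

theorem coord_inr_x_smul (hB : IsKleinModuleBasis k n M B) (j : Fin n) (m : M) :
    B.coord (Sum.inr j) (X • m) = B.coord (Sum.inl j) m := by
  refine B.apply_smul_eq_of_forall _ (fun i => ?_) m
  rcases i with i | i
  · rw [hB.1 i]
    simp [Finsupp.single_apply]
  · rw [hB.2.2.2.1 i]
    simp

theorem coord_inr_zero_y_smul (hB : IsKleinModuleBasis k n M B) (hn : 0 < n) (m : M) :
    B.coord (Sum.inr ⟨0, hn⟩) (Y • m) = 0 := by
  refine B.apply_smul_eq_of_forall (g := 0) _ (fun i => ?_) m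
  rcases i with i | i
  · by_cases hi : (i : ℕ) + 1 < n
    · rw [hB.2.1 i hi]
      simp [Fin.ext_iff]
    · rw [hB.2.2.1 i (by omega)]
      simp
  · rw [hB.2.2.2.2 i]
    simp

theorem coord_inr_succ_y_smul (hB : IsKleinModuleBasis k n M B) (j : Fin n)
    (hj : (j : ℕ) + 1 < n) (m : M) :
    B.coord (Sum.inr ⟨j + 1, hj⟩) (Y • m) = B.coord (Sum.inl j) m := by
  refine B.apply_smul_eq_of_forall _ (fun i => ?_) m
  rcases i with i | i
  · by_cases hi : (i : ℕ) + 1 < n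
    · rw [hB.2.1 i hi]
      simp [Finsupp.single_apply, Fin.ext_iff, eq_comm]
    · have hij : i ≠ j := by rintro rfl; exact hi hj
      rw [hB.2.2.1 i (by omega)]
      simp [hij]
  · rw [hB.2.2.2.2 i]
    simp

theorem linearMap_eq_zero_of_forall_inl (hB : IsKleinModuleBasis k n M B) {N : Type*}
    [AddCommGroup N] [Module k N] [Module (MonoidAlgebra k V4) N]
    [IsScalarTower k (MonoidAlgebra k V4) N] (φ : M →ₗ[MonoidAlgebra k V4] N)
    (h : ∀ i, φ (B (Sum.inl i)) = 0) : φ = 0 := by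
  suffices φ.restrictScalars k = 0 from LinearMap.restrictScalars_injective k this
  refine B.ext fun i => ?_
  rcases i with i | i
  · exact h i
  · rw [← hB.1 i]
    simp [h i]

theorem coord_inl_eq_zero_of_x_mul_y_smul_eq_zero [CharP k 2] (hB : IsKleinModuleBasis k n M B)
    {Q : Type*} [AddCommGroup Q] [Module (MonoidAlgebra k V4) Q]
    [Module.Flat (MonoidAlgebra k V4) Q] (g : Q →ₗ[MonoidAlgebra k V4] M) {q : Q}
    (hq : (X * Y) • q = 0) (j : Fin n) : B.coord (Sum.inl j) (g q) = 0 := by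
  obtain ⟨e, e', rfl⟩ := KleinFour.exists_eq_x_smul_add_y_smul hq
  rw [map_add, map_smul, map_smul, map_add, hB.coord_inl_x_smul, hB.coord_inl_y_smul, add_zero]

theorem apply_inl_eq_zero_of_comp_flat [CharP k 2] (hB : IsKleinModuleBasis k n M B)
    (hn : 0 < n) {Q : Type*} [AddCommGroup Q] [Module (MonoidAlgebra k V4) Q]
    [Module.Flat (MonoidAlgebra k V4) Q] (f : M →ₗ[MonoidAlgebra k V4] Q)
    (g : Q →ₗ[MonoidAlgebra k V4] M)
    (hline : ∀ i, g (f (B (Sum.inl i))) ∈ Submodule.span k {B (Sum.inr ⟨0, hn⟩)})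
    (i : Fin n) : g (f (B (Sum.inl i))) = 0 := by
  have hrad : ∀ i, ∃ e e' : Q, f (B (Sum.inl i)) = X • e + Y • e' := fun i =>
    KleinFour.exists_eq_x_smul_add_y_smul (by rw [← map_smul, hB.x_mul_y_smul, map_zero])
  choose e e' he using hrad
  choose r hr using fun i => Submodule.mem_span_singleton.mp (hline i)
  have hdecomp : ∀ i, g (f (B (Sum.inl i))) = X • g (e i) + Y • g (e' i) := fun i => by
    rw [he, map_add, map_smul, map_smul]
  have hc : ∀ i j : Fin n, j ≤ i → B.coord (Sum.inl j) (g (e i)) = 0 := by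
    refine Fin.eq_zero_of_le_of_diagonal_recursion
      (d := fun i j => B.coord (Sum.inl j) (g (e' i)))
      (fun i j hi => ?_) (fun i hi j => ?_) (fun i j hj => ?_)
    · refine hB.coord_inl_eq_zero_of_x_mul_y_smul_eq_zero g ?_ j
      rw [← KleinFour.y_smul_x_smul_add_y_smul, ← he, ← map_smul f, hB.2.2.1 i hi, map_zero]
    · -- `xy • e i` and `xy • e' (i + 1)` are both `f (b_{i+1})`, as `y a_i = b_{i+1} = x a_{i+1}`
      rw [← sub_eq_zero, ← map_sub, ← map_sub]
      refine hB.coord_inl_eq_zero_of_x_mul_y_smul_eq_zero g ?_ j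
      rw [smul_sub, ← KleinFour.x_smul_x_smul_add_y_smul, ← KleinFour.y_smul_x_smul_add_y_smul,
        ← he, ← he, ← map_smul f, ← map_smul f, hB.1, hB.2.1 i hi, sub_self]
    · have := congrArg (B.coord (Sum.inr ⟨j + 1, hj⟩)) ((hr i).trans (hdecomp i))
      rwa [map_add, hB.coord_inr_x_smul, hB.coord_inr_succ_y_smul, map_smul,
        Module.Basis.coord_apply, Module.Basis.repr_self, Finsupp.single_apply,
        if_neg (by simp [Fin.ext_iff]), smul_zero, eq_comm] at this
  have hr0 : r i = 0 := by
    have := congrArg (B.coord (Sum.inr ⟨0, hn⟩)) ((hr i).trans (hdecomp i))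
    rwa [map_add, hB.coord_inr_x_smul, hB.coord_inr_zero_y_smul,
      hc i _ (Nat.zero_le (i : ℕ)), map_smul, Module.Basis.coord_apply, Module.Basis.repr_self,
      Finsupp.single_eq_same, smul_eq_mul, mul_one, add_zero] at this
  rw [← hr i, hr0, zero_smul]

end IsKleinModuleBasis

end

theorem stmt9_general (k : Type) [Field k] [CharP k 2]
    (n : ℕ) (hn : 0 < n)
    (M : Type) [AddCommGroup M] [Module k M] [Module (MonoidAlgebra k V4) M]
    [IsScalarTower k (MonoidAlgebra k V4) M]
    (B : Module.Basis (Fin n ⊕ Fin n) k M) (hB : IsKleinModuleBasis k n M B)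
    (φ : M →ₗ[MonoidAlgebra k V4] M)
    (hrange : Set.range φ = (Submodule.span k {B (Sum.inr ⟨0, hn⟩)} : Submodule k M)) :
    ¬ FactorsThroughProjective φ := by
  rintro ⟨Q, f, g, hQ, rfl⟩
  have hzero : g ∘ₗ f = 0 := hB.linearMap_eq_zero_of_forall_inl _ <|
    hB.apply_inl_eq_zero_of_comp_flat hn f g fun i => by
      rw [← SetLike.mem_coe, ← hrange]; exact ⟨_, rfl⟩
  have hb : B (Sum.inr ⟨0, hn⟩) ∈ Set.range (g ∘ₗ f) := by
    rw [hrange]; exact Submodule.subset_span rfl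
  obtain ⟨m, hm⟩ := hb
  exact B.ne_zero _ (by rw [← hm, hzero, LinearMap.zero_apply])

/-- If the range of an endomorphism of `M_n` is exactly the line `k·b_1`, then
it does not factor through a projective `kV₄`-module. -/
theorem stmt9 (k : Type) [Field k] [IsAlgClosed k] [CharP k 2]
    (n : ℕ) (hn : 0 < n)
    (M : Type) [AddCommGroup M] [Module k M] [Module (MonoidAlgebra k V4) M]
    [IsScalarTower k (MonoidAlgebra k V4) M]
    (B : Module.Basis (Fin n ⊕ Fin n) k M) (hB : IsKleinModuleBasis k n M B)
    (φ : M →ₗ[MonoidAlgebra k V4] M)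
    (hrange : Set.range φ = (Submodule.span k {B (Sum.inr ⟨0, hn⟩)} : Submodule k M)) :
    ¬ FactorsThroughProjective φ :=
  stmt9_general k n hn M B hB φ hrange
end

section
/- Let m < n be positive integers. Write a^l_i, b^l_i for the distinguished basis of M_l. There is a kV₄-module homomorphism ζ : M_m → M_n with ζ(a^m_i) = a^n_{n−m+i} and ζ(b^m_i) = b^n_{n−m+i} for 1 ≤ i ≤ m, and a kV₄-module homomorphism ξ : M_n → M_{n−m} with ξ(a^n_i) = a^{n−m}_i and ξ(b^n_i) = b^{n−m}_i for 1 ≤ i ≤ n−m, and ξ(a^n_i) = ξ(b^n_i) = 0 for n−m < i ≤ n. The sequence 0 → M_m → M_n → M_{n−m} → 0 given by ζ and ξ is exact: ζ is injective, ξ is surjective, and range ζ = ker ξ. Moreover ζ is not a split monomorphism and ξ is not a split epimorphism. -/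
universe u v w

/-! `ζ` maps the basis of `M_m` injectively into the basis of `M_n` and `ξ ∘ ζ = 0`, so exactness
in the middle is a count of `k`-dimensions: `2n = 2m + 2(n - m)`. A retraction `r` of `ζ` would
give `b₁ = r (ζ b₁) = r (y • aₙ₋ₘ) = y • r aₙ₋ₘ` in `M_m`, but no `y`-multiple has a `b₁`-coordinate.
A section `σ` of `ξ` would give `v = σ aₙ₋ₘ` with `y • v = 0`; in `M_n` this forces
`x • v ∈ k bₙ ⊆ ker ξ`, whereas `ξ (x • v) = x • aₙ₋ₘ = bₙ₋ₘ ≠ 0`. -/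

theorem LinearMap.injective_of_basis_map {R M N ι κ : Type*} [Ring R] [AddCommGroup M]
    [Module R M] [AddCommGroup N] [Module R N] (f : M →ₗ[R] N) (b : Module.Basis ι R M)
    (c : Module.Basis κ R N) (e : ι → κ) (he : Function.Injective e)
    (hf : ∀ i, f (b i) = c (e i)) : Function.Injective f :=
  f.injective_of_linearIndependent b.span_eq <| by
    simpa only [Function.comp_def, hf] using c.linearIndependent.comp e he

theorem LinearMap.surjective_of_basis_mem_range {R M N ι : Type*} [Semiring R]
    [AddCommMonoid M] [Module R M] [AddCommMonoid N] [Module R N] (f : M →ₗ[R] N)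
    (c : Module.Basis ι R N)
    (hf : ∀ i, c i ∈ LinearMap.range f) : Function.Surjective f := by
  rw [← LinearMap.range_eq_top, eq_top_iff, ← c.span_eq, Submodule.span_le]
  rintro _ ⟨i, rfl⟩
  exact hf i

theorem LinearMap.range_eq_ker_of_finrank_eq {k A M₁ M₂ M₃ : Type*} [Field k] [Ring A]
    [Algebra k A] [AddCommGroup M₁] [Module k M₁] [Module A M₁] [IsScalarTower k A M₁]
    [AddCommGroup M₂] [Module k M₂] [Module A M₂] [IsScalarTower k A M₂]
    [AddCommGroup M₃] [Module k M₃] [Module A M₃] [IsScalarTower k A M₃]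
    [FiniteDimensional k M₂] (f : M₁ →ₗ[A] M₂) (g : M₂ →ₗ[A] M₃)
    (hf : Function.Injective f) (hg : Function.Surjective g) (hgf : g ∘ₗ f = 0)
    (hdim : Module.finrank k M₂ = Module.finrank k M₁ + Module.finrank k M₃) :
    LinearMap.range f = LinearMap.ker g := by
  apply Submodule.restrictScalars_injective k
  rw [← LinearMap.range_restrictScalars, ← LinearMap.ker_restrictScalars]
  have hle : LinearMap.range (f.restrictScalars k) ≤ LinearMap.ker (g.restrictScalars k) := by
    rintro _ ⟨v, rfl⟩
    exact LinearMap.congr_fun hgf v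
  have hrank := (g.restrictScalars k).finrank_range_add_finrank_ker
  rw [LinearMap.range_eq_top.mpr (show Function.Surjective (g.restrictScalars k) from hg),
    finrank_top] at hrank
  exact Submodule.eq_of_le_of_finrank_eq hle <| by
    rw [LinearMap.finrank_range_of_inj (show Function.Injective (f.restrictScalars k) from hf)]
    omega

namespace IsKleinModuleBasis

variable {k : Type} [Field k] {n : ℕ} {M : Type} [AddCommGroup M] [Module k M]
  [Module (MonoidAlgebra k V4) M] [IsScalarTower k (MonoidAlgebra k V4) M]
  {B : Module.Basis (Fin n ⊕ Fin n) k M}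

local notation "𝔵" => MonoidAlgebra.of k V4 sV4 - 1
local notation "𝔶" => MonoidAlgebra.of k V4 tV4 - 1

theorem smul_x_eq_sum (hB : IsKleinModuleBasis k n M B) (v : M) :
    𝔵 • v = ∑ i, B.repr v (Sum.inl i) • B (Sum.inr i) := by
  obtain ⟨hxa, -, -, hxb, -⟩ := hB
  conv_lhs => rw [← B.sum_repr v]
  rw [Finset.smul_sum, Fintype.sum_sum_type]
  simp only [smul_comm 𝔵 (B.repr v _), hxa, hxb, smul_zero, Finset.sum_const_zero, add_zero]

theorem repr_smul_y_inr_succ (hB : IsKleinModuleBasis k n M B) (v : M) (i : Fin n)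
    (hi : (i : ℕ) + 1 < n) : B.repr (𝔶 • v) (Sum.inr ⟨i + 1, hi⟩) = B.repr v (Sum.inl i) := by
  obtain ⟨-, hya, hya_last, -, hyb⟩ := hB
  suffices (B.coord (Sum.inr ⟨i + 1, hi⟩)).comp (DistribSMul.toLinearMap k M 𝔶) =
      B.coord (Sum.inl i) from LinearMap.congr_fun this v
  refine B.ext fun e => ?_
  rcases e with j | j <;> simp only [LinearMap.comp_apply, DistribSMul.toLinearMap_apply]
  · by_cases hj : (j : ℕ) + 1 < n
    · rw [hya j hj]
      simp [Finsupp.single_apply, Fin.ext_iff, eq_comm]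
    · rw [hya_last j (by omega)]
      simp [Finsupp.single_apply, Fin.ext_iff]
      omega
  · rw [hyb j]
    simp

theorem repr_smul_y_inr_zero (hB : IsKleinModuleBasis k n M B) (v : M) (hn : 0 < n) :
    B.repr (𝔶 • v) (Sum.inr ⟨0, hn⟩) = 0 := by
  obtain ⟨-, hya, hya_last, -, hyb⟩ := hB
  suffices (B.coord (Sum.inr ⟨0, hn⟩)).comp (DistribSMul.toLinearMap k M 𝔶) = 0 from
    LinearMap.congr_fun this v
  refine B.ext fun e => ?_
  rcases e with j | j <;> simp only [LinearMap.comp_apply, DistribSMul.toLinearMap_apply]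
  · by_cases hj : (j : ℕ) + 1 < n
    · rw [hya j hj]
      simp
    · rw [hya_last j (by omega)]
      simp
  · rw [hyb j]
    simp

theorem smul_y_ne_inr_zero (hB : IsKleinModuleBasis k n M B) (v : M) (hn : 0 < n) :
    𝔶 • v ≠ B (Sum.inr ⟨0, hn⟩) := by
  intro h
  have := hB.repr_smul_y_inr_zero v hn
  rw [h, Module.Basis.repr_self, Finsupp.single_eq_same] at this
  exact one_ne_zero this

theorem smul_x_eq_of_smul_y_eq_zero (hB : IsKleinModuleBasis k n M B) {v : M} (hv : 𝔶 • v = 0)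
    (hn : 0 < n) :
    𝔵 • v = B.repr v (Sum.inl ⟨n - 1, by omega⟩) • B (Sum.inr ⟨n - 1, by omega⟩) := by
  rw [hB.smul_x_eq_sum, Finset.sum_eq_single_of_mem _ (Finset.mem_univ _)]
  intro i _ hi
  have hi' : (i : ℕ) + 1 < n := by
    have : (i : ℕ) ≠ n - 1 := fun h => hi (Fin.ext h)
    omega
  rw [← hB.repr_smul_y_inr_succ v i hi', hv, map_zero, Finsupp.zero_apply, zero_smul]

theorem not_exists_retraction {M' : Type} [AddCommGroup M'] [Module (MonoidAlgebra k V4) M']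
    (hB : IsKleinModuleBasis k n M B) (hn : 0 < n) (ζ : M →ₗ[MonoidAlgebra k V4] M') (w : M')
    (hζ : ζ (B (Sum.inr ⟨0, hn⟩)) = 𝔶 • w) :
    ¬ ∃ r : M' →ₗ[MonoidAlgebra k V4] M, r ∘ₗ ζ = LinearMap.id := by
  rintro ⟨r, hr⟩
  apply hB.smul_y_ne_inr_zero (r w) hn
  rw [← map_smul, ← hζ, ← LinearMap.comp_apply, hr, LinearMap.id_apply]

theorem not_exists_section {l : ℕ} {N : Type} [AddCommGroup N] [Module k N]
    [Module (MonoidAlgebra k V4) N] [IsScalarTower k (MonoidAlgebra k V4) N]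
    {C : Module.Basis (Fin l ⊕ Fin l) k N} (hB : IsKleinModuleBasis k n M B)
    (hC : IsKleinModuleBasis k l N C) (hn : 0 < n) (hl : 0 < l)
    (ξ : M →ₗ[MonoidAlgebra k V4] N) (hξ : ξ (B (Sum.inr ⟨n - 1, by omega⟩)) = 0) :
    ¬ ∃ σ : N →ₗ[MonoidAlgebra k V4] M, ξ ∘ₗ σ = LinearMap.id := by
  rintro ⟨σ, hσ⟩
  obtain ⟨hxa, -, hya_last, -, -⟩ := hC
  set v := σ (C (Sum.inl ⟨l - 1, by omega⟩))
  have hv : 𝔶 • v = 0 := by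
    rw [← map_smul, hya_last _ (by simp; omega), map_zero]
  have hξv : ξ (𝔵 • v) = C (Sum.inr ⟨l - 1, by omega⟩) := by
    rw [map_smul, ← LinearMap.comp_apply, hσ, LinearMap.id_apply, hxa]
  rw [hB.smul_x_eq_of_smul_y_eq_zero hv hn, LinearMap.map_smul_of_tower, hξ, smul_zero] at hξv
  exact C.ne_zero _ hξv.symm

end IsKleinModuleBasis

/-- The maps `ζ : M_m → M_n` and `ξ : M_n → M_{n-m}` form a short exact
sequence `0 → M_m → M_n → M_{n-m} → 0`; moreover `ζ` is not a split
monomorphism and `ξ` is not a split epimorphism. -/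
theorem stmt12 (k : Type) [Field k]
    (m n : ℕ) (hm : 0 < m) (hmn : m < n)
    (M₁ : Type) [AddCommGroup M₁] [Module k M₁] [Module (MonoidAlgebra k V4) M₁]
    [IsScalarTower k (MonoidAlgebra k V4) M₁]
    (M₂ : Type) [AddCommGroup M₂] [Module k M₂] [Module (MonoidAlgebra k V4) M₂]
    [IsScalarTower k (MonoidAlgebra k V4) M₂]
    (M₃ : Type) [AddCommGroup M₃] [Module k M₃] [Module (MonoidAlgebra k V4) M₃]
    [IsScalarTower k (MonoidAlgebra k V4) M₃]
    (B₁ : Module.Basis (Fin m ⊕ Fin m) k M₁) (hB₁ : IsKleinModuleBasis k m M₁ B₁)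
    (B₂ : Module.Basis (Fin n ⊕ Fin n) k M₂) (hB₂ : IsKleinModuleBasis k n M₂ B₂)
    (B₃ : Module.Basis (Fin (n - m) ⊕ Fin (n - m)) k M₃)
    (hB₃ : IsKleinModuleBasis k (n - m) M₃ B₃)
    (ζ : M₁ →ₗ[MonoidAlgebra k V4] M₂)
    (hζa : ∀ i : Fin m, ζ (B₁ (Sum.inl i)) = B₂ (Sum.inl ⟨n - m + (i : ℕ), by omega⟩))
    (hζb : ∀ i : Fin m, ζ (B₁ (Sum.inr i)) = B₂ (Sum.inr ⟨n - m + (i : ℕ), by omega⟩))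
    (ξ : M₂ →ₗ[MonoidAlgebra k V4] M₃)
    (hξa : ∀ (i : Fin n) (h : (i : ℕ) < n - m), ξ (B₂ (Sum.inl i)) = B₃ (Sum.inl ⟨(i : ℕ), h⟩))
    (hξa0 : ∀ i : Fin n, n - m ≤ (i : ℕ) → ξ (B₂ (Sum.inl i)) = 0)
    (hξb : ∀ (i : Fin n) (h : (i : ℕ) < n - m), ξ (B₂ (Sum.inr i)) = B₃ (Sum.inr ⟨(i : ℕ), h⟩))
    (hξb0 : ∀ i : Fin n, n - m ≤ (i : ℕ) → ξ (B₂ (Sum.inr i)) = 0) :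
    Function.Injective ζ ∧ Function.Surjective ξ ∧
      LinearMap.range ζ = LinearMap.ker ξ ∧
      ¬ (∃ r : M₂ →ₗ[MonoidAlgebra k V4] M₁, r ∘ₗ ζ = LinearMap.id) ∧
      ¬ (∃ σ : M₃ →ₗ[MonoidAlgebra k V4] M₂, ξ ∘ₗ σ = LinearMap.id) := by
  let shift : Fin m → Fin n := fun i => ⟨n - m + i, by omega⟩
  have hshift : Function.Injective shift := fun i j h => Fin.ext (by simpa [shift] using h)
  have hinj : Function.Injective ζ :=
    (ζ.restrictScalars k).injective_of_basis_map B₁ B₂ (Sum.map shift shift)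
      (hshift.sumMap hshift) (by rintro (i | i); exacts [hζa i, hζb i])
  have hsurj : Function.Surjective ξ :=
    (ξ.restrictScalars k).surjective_of_basis_mem_range B₃ <| by
      rintro (i | i)
      exacts [⟨B₂ (Sum.inl ⟨i, by omega⟩), hξa _ i.2⟩, ⟨B₂ (Sum.inr ⟨i, by omega⟩), hξb _ i.2⟩]
  have hcomp : ξ ∘ₗ ζ = 0 := by
    refine LinearMap.restrictScalars_injective k (B₁.ext ?_)
    rintro (i | i)
    exacts [(congrArg ξ (hζa i)).trans (hξa0 _ (by simp)),
      (congrArg ξ (hζb i)).trans (hξb0 _ (by simp))]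
  have : FiniteDimensional k M₂ := Module.Finite.of_basis B₂
  refine ⟨hinj, hsurj, ζ.range_eq_ker_of_finrank_eq (k := k) ξ hinj hsurj hcomp ?_,
    hB₁.not_exists_retraction hm ζ (B₂ (Sum.inl ⟨n - m - 1, by omega⟩)) ?_,
    hB₂.not_exists_section hB₃ (by omega) (by omega) ξ (hξb0 _ (by dsimp only; omega))⟩
  · simp only [Module.finrank_eq_card_basis B₁, Module.finrank_eq_card_basis B₂,
      Module.finrank_eq_card_basis B₃, Fintype.card_sum, Fintype.card_fin]
    omega
  · obtain ⟨-, hya, -, -, -⟩ := hB₂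
    rw [hζb, hya _ (by dsimp only; omega)]
    congr 3
    dsimp only
    omega
end
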